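/- Let u ≠ v with v reachable from u, and let q be the next-to-last vertex of the lexicographically-first shortest path P(u, v) (so (q, v) is its last edge). Then idx(q) = min{ idx(x) : (x, v) ∈ E, x = u or x is reachable from u, and d(u, x) + w(x, v) = d(u, v) } (where d(u, u) = 0), and if q ≠ u then the prefix of P(u, v) ending at q equals P(u, q). -/

import Mathlib

/-- `L` is a directed walk from `u` to `v`: a nonempty list of vertices starting at `u`,
ending at `v`, with consecutive vertices joined by edges. Its number of edges is `L.length - 1`. -/
def IsWalk {V : Type} (E : V → V → Prop) (u v : V) (L : List V) : Prop :=
  L ≠ [] ∧ L.head? = some u ∧ L.getLast? = some v ∧ L.Chain' E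

/-- A directed path: a walk with pairwise distinct vertices. -/
def IsPath {V : Type} (E : V → V → Prop) (u v : V) (L : List V) : Prop :=
  IsWalk E u v L ∧ L.Nodup

/-- The weight of a walk: the sum of the weights of its consecutive edges
(the trivial walk has weight 0). -/
def walkWeight {V : Type} (w : V → V → ℝ) (L : List V) : ℝ :=
  ((L.zip L.tail).map fun e => w e.1 e.2).sum

/-- `v` is reachable from `u`. -/
def Reaches {V : Type} (E : V → V → Prop) (u v : V) : Prop :=
  ∃ L, IsWalk E u v L

/-- BFS level: the minimum number of edges of a directed walk from `s` to `v`. -/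
noncomputable def level {V : Type} (E : V → V → Prop) (s v : V) : ℕ :=
  sInf {k | ∃ L, IsWalk E s v L ∧ L.length = k + 1}

/-- `L` is the lexicographically-first shortest path from `u` to `v`: a minimum-weight
directed path from `u` to `v` whose reversed sequence of vertex indices is
lexicographically smallest among all minimum-weight directed paths from `u` to `v`. -/
def IsLexFirstSP {V : Type} (E : V → V → Prop) (w : V → V → ℝ) (idx : V → ℕ)
    (u v : V) (L : List V) : Prop :=
  IsPath E u v L ∧
  (∀ M, IsPath E u v M → walkWeight w L ≤ walkWeight w M) ∧
  (∀ M, IsPath E u v M → walkWeight w M = walkWeight w L →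
    ¬ List.Lex (· < ·) (M.reverse.map idx) (L.reverse.map idx))

/-- `pdist E w u v` is the minimum weight `d(u, v)` of a directed path from `u` to `v`
(for `v` reachable from `u`); in particular `pdist E w u u = 0`, the weight of the
trivial path. -/
noncomputable def pdist {V : Type} (E : V → V → Prop) (w : V → V → ℝ) (u v : V) : ℝ :=
  sInf {r : ℝ | ∃ L, IsPath E u v L ∧ walkWeight w L = r}

/-!
Appending the edge `(q, v)` to a path from `u` to `q` yields a path from `u` to `v`, because a
topological numbering forbids returning to `v`. Hence the prefix of a lexicographically-first
shortest path `P(u, v)` is itself shortest and lexicographically first among paths to `q`: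
a better path to `q` would extend to a better path to `v`. Likewise a predecessor `x` of `v` lying
on a shortest route with `idx x < idx q` would produce a shortest path to `v` whose reversed index
sequence is smaller than that of `P(u, v)` already in its second entry.
-/

section

variable {V : Type} {E : V → V → Prop} {w : V → V → ℝ} {idx : V → ℕ} {u v x : V}

lemma walkWeight_cons_cons (a b : V) (t : List V) :
    walkWeight w (a :: b :: t) = w a b + walkWeight w (b :: t) := by
  simp [walkWeight]

lemma walkWeight_append_singleton :
    ∀ {L : List V}, L.getLast? = some x → walkWeight w (L ++ [v]) = walkWeight w L + w x v
  | [], h => by simp at h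
  | [a], h => by
    obtain rfl : a = x := by simpa using h
    simp [walkWeight]
  | a :: b :: t, h => by
    rw [List.getLast?_cons_cons] at h
    rw [List.cons_append, List.cons_append, walkWeight_cons_cons, ← List.cons_append,
      walkWeight_append_singleton h, walkWeight_cons_cons]
    ring

lemma isPath_singleton (u : V) : IsPath E u u [u] :=
  ⟨⟨List.cons_ne_nil u [], rfl, rfl, List.isChain_singleton u⟩, List.nodup_singleton u⟩

lemma IsWalk.append_singleton {P : List V} (hP : IsWalk E u x P) (hxv : E x v) :
    IsWalk E u v (P ++ [v]) := by
  obtain ⟨hne, hhead, hlast, hchain⟩ := hP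
  refine ⟨by simp, by rwa [List.head?_append_of_ne_nil _ hne], List.getLast?_concat, ?_⟩
  refine List.isChain_append.2 ⟨hchain, List.isChain_singleton v, ?_⟩
  rw [hlast]
  simpa using hxv

lemma IsWalk.of_append_singleton {M : List V} (h : IsWalk E u v (M ++ [v]))
    (hx : M.getLast? = some x) : IsWalk E u x M ∧ E x v := by
  obtain ⟨-, hhead, -, hchain⟩ := h
  have hne : M ≠ [] := by rintro rfl; simp at hx
  obtain ⟨hchainM, -, hlink⟩ := List.isChain_append.1 hchain
  exact ⟨⟨hne, by rwa [List.head?_append_of_ne_nil _ hne] at hhead, hx, hchainM⟩,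
    hlink x hx v rfl⟩

lemma IsWalk.isPath (htopo : ∀ a b, E a b → idx a < idx b) {L : List V} (h : IsWalk E u v L) :
    IsPath E u v L := by
  have : Trans (fun a b => idx a < idx b) (fun a b => idx a < idx b)
      (fun a b : V => idx a < idx b) := ⟨lt_trans⟩
  have hlt := List.isChain_iff_pairwise.1 (h.2.2.2.imp fun {a b} => htopo a b)
  exact ⟨h, hlt.imp fun hab => ne_of_apply_ne idx hab.ne⟩

lemma IsPath.append_singleton (htopo : ∀ a b, E a b → idx a < idx b) {P : List V}
    (hP : IsPath E u x P) (hxv : E x v) : IsPath E u v (P ++ [v]) :=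
  (hP.1.append_singleton hxv).isPath htopo

lemma IsPath.of_append_singleton {M : List V} (h : IsPath E u v (M ++ [v]))
    (hx : M.getLast? = some x) : IsPath E u x M ∧ E x v :=
  let ⟨hwalk, hxv⟩ := h.1.of_append_singleton hx
  ⟨⟨hwalk, h.2.sublist (List.sublist_append_left M [v])⟩, hxv⟩

lemma pdist_eq_walkWeight {L : List V} (hL : IsPath E u v L)
    (hmin : ∀ M, IsPath E u v M → walkWeight w L ≤ walkWeight w M) :
    pdist E w u v = walkWeight w L :=
  IsLeast.csInf_eq ⟨⟨L, hL, rfl⟩, by rintro _ ⟨M, hM, rfl⟩; exact hmin M hM⟩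

lemma finite_pathWeights [Finite V] (E : V → V → Prop) (w : V → V → ℝ) (u v : V) :
    {r : ℝ | ∃ L, IsPath E u v L ∧ walkWeight w L = r}.Finite := by
  have hpaths : {L : List V | IsPath E u v L}.Finite :=
    (List.finite_length_le V (Nat.card V)).subset fun L hL => hL.2.length_le_natCard
  exact (hpaths.image (walkWeight w)).subset fun r ⟨L, hL, hr⟩ => ⟨L, hL, hr⟩

lemma exists_isPath_walkWeight_eq_pdist [Finite V] {N : List V} (hN : IsPath E u v N) :
    ∃ L, IsPath E u v L ∧ walkWeight w L = pdist E w u v :=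
  Set.Nonempty.csInf_mem (s := {r : ℝ | ∃ L, IsPath E u v L ∧ walkWeight w L = r})
    ⟨walkWeight w N, N, hN, rfl⟩ (finite_pathWeights E w u v)

lemma List.Lex.reverse_append_singleton {α β : Type*} {r : β → β → Prop} {f : α → β}
    {N M : List α} (h : List.Lex r (N.reverse.map f) (M.reverse.map f)) (v : α) :
    List.Lex r ((N ++ [v]).reverse.map f) ((M ++ [v]).reverse.map f) := by
  simpa only [List.reverse_append, List.reverse_singleton, List.singleton_append, List.map_cons]
    using h.cons

lemma List.lex_reverse_of_getLast? {α β : Type*} {r : β → β → Prop} {f : α → β}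
    {N M : List α} {x y : α} (hx : N.getLast? = some x) (hy : M.getLast? = some y)
    (h : r (f x) (f y)) : List.Lex r (N.reverse.map f) (M.reverse.map f) := by
  obtain ⟨N, rfl⟩ := List.getLast?_eq_some_iff.1 hx
  obtain ⟨M, rfl⟩ := List.getLast?_eq_some_iff.1 hy
  simpa only [List.reverse_append, List.reverse_singleton, List.singleton_append, List.map_cons]
    using List.Lex.rel h

end

section LexFirst

variable {V : Type} {E : V → V → Prop} {w : V → V → ℝ} {idx : V → ℕ} {u v q : V} {M : List V}

lemma IsLexFirstSP.pdist_eq {L : List V} (hL : IsLexFirstSP E w idx u v L) :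
    pdist E w u v = walkWeight w L :=
  pdist_eq_walkWeight hL.1 hL.2.1

lemma IsLexFirstSP.of_append_singleton (htopo : ∀ a b, E a b → idx a < idx b)
    (hL : IsLexFirstSP E w idx u v (M ++ [v])) (hq : M.getLast? = some q) :
    IsLexFirstSP E w idx u q M := by
  obtain ⟨hpath, hmin, hlex⟩ := hL
  obtain ⟨hMpath, hqv⟩ := hpath.of_append_singleton hq
  have extend (N : List V) (hN : IsPath E u q N) :
      IsPath E u v (N ++ [v]) ∧ walkWeight w (N ++ [v]) = walkWeight w N + w q v :=
    ⟨hN.append_singleton htopo hqv, walkWeight_append_singleton hN.1.2.2.1⟩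
  rw [walkWeight_append_singleton hq] at hmin hlex
  refine ⟨hMpath, fun N hN => ?_, fun N hN hNw hNlex => ?_⟩
  · have hle := hmin _ (extend N hN).1
    rw [(extend N hN).2] at hle
    linarith
  · exact hlex _ (extend N hN).1 (by rw [(extend N hN).2, hNw])
      (hNlex.reverse_append_singleton v)

lemma IsLexFirstSP.pdist_add_weight_eq (htopo : ∀ a b, E a b → idx a < idx b)
    (hL : IsLexFirstSP E w idx u v (M ++ [v])) (hq : M.getLast? = some q) :
    pdist E w u q + w q v = pdist E w u v := by
  rw [(hL.of_append_singleton htopo hq).pdist_eq, hL.pdist_eq, walkWeight_append_singleton hq]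

lemma IsLexFirstSP.idx_le_of_pdist_add_weight_eq [Finite V]
    (htopo : ∀ a b, E a b → idx a < idx b)
    (hL : IsLexFirstSP E w idx u v (M ++ [v])) (hq : M.getLast? = some q) {x : V}
    (hxv : E x v) (hx : x = u ∨ Reaches E u x)
    (hdist : pdist E w u x + w x v = pdist E w u v) : idx q ≤ idx x := by
  by_contra! hlt
  obtain ⟨N, hN, hNw⟩ : ∃ N, IsPath E u x N ∧ walkWeight w N = pdist E w u x := by
    rcases hx with rfl | ⟨N, hN⟩
    · exact exists_isPath_walkWeight_eq_pdist (isPath_singleton x)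
    · exact exists_isPath_walkWeight_eq_pdist (hN.isPath htopo)
  refine hL.2.2 (N ++ [v]) (hN.append_singleton htopo hxv) ?_
    ((List.lex_reverse_of_getLast? hN.1.2.2.1 hq hlt).reverse_append_singleton v)
  rw [walkWeight_append_singleton hN.1.2.2.1, hNw, hdist, hL.pdist_eq]

end LexFirst

theorem stmt9_general (V : Type) [Fintype V] (E : V → V → Prop) (w : V → V → ℝ)
    (idx : V → ℕ)
    (htopo : ∀ a b, E a b → idx a < idx b)
    (u v : V)
    (L : List V) (hL : IsLexFirstSP E w idx u v L)
    (q : V) (hq : L.dropLast.getLast? = some q) :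
    IsLeast {m : ℕ | ∃ x, idx x = m ∧ E x v ∧ (x = u ∨ Reaches E u x) ∧
        pdist E w u x + w x v = pdist E w u v} (idx q) ∧
    (q ≠ u → IsLexFirstSP E w idx u q L.dropLast) := by
  obtain ⟨M, rfl⟩ := List.getLast?_eq_some_iff.1 hL.1.1.2.2.1
  rw [List.dropLast_concat] at hq ⊢
  have hM := hL.of_append_singleton htopo hq
  refine ⟨⟨⟨q, rfl, (hL.1.of_append_singleton hq).2, Or.inr ⟨M, hM.1.1⟩,
    hL.pdist_add_weight_eq htopo hq⟩, ?_⟩, fun _ => hM⟩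
  rintro _ ⟨x, rfl, hxv, hx, hdist⟩
  exact hL.idx_le_of_pdist_add_weight_eq htopo hq hxv hx hdist

/-- In a finite DAG with a topological numbering `idx`, let `u ≠ v` with
`v` reachable from `u`, and let `q` be the next-to-last vertex of the
lexicographically-first shortest path `P(u, v)` (so `(q, v)` is its last edge). Then
`idx q` is the minimum of `{ idx x : (x, v) ∈ E, x = u or x reachable from u, and
d(u, x) + w(x, v) = d(u, v) }`, and if `q ≠ u` then the prefix of `P(u, v)` ending at `q`
(i.e. `L.dropLast`) equals the lexicographically-first shortest path `P(u, q)`. -/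
theorem stmt9 (V : Type) [Fintype V] (E : V → V → Prop) (w : V → V → ℝ)
    (idx : V → ℕ) (hinj : Function.Injective idx)
    (htopo : ∀ a b, E a b → idx a < idx b)
    (u v : V) (huv : u ≠ v) (hr : Reaches E u v)
    (L : List V) (hL : IsLexFirstSP E w idx u v L)
    (q : V) (hq : L.dropLast.getLast? = some q) :
    IsLeast {m : ℕ | ∃ x, idx x = m ∧ E x v ∧ (x = u ∨ Reaches E u x) ∧
        pdist E w u x + w x v = pdist E w u v} (idx q) ∧
    (q ≠ u → IsLexFirstSP E w idx u q L.dropLast) :=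
  stmt9_general V E w idx htopo u v L hL q hq
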